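/- arXiv:1503.00389 — 2 statements merged into one kernel-verified Lean document; each statement's English description precedes it below -/
import Mathlib

section
/- With the same setup: if k ≥ 1, P(h) = k, and (in case k ≥ 2) h ∉ C_k, then there exists n ≥ 0 such that P((τ¹_*)^n(h)) = 1. -/
/-- The map `τ¹_*` on functions `ℤ* → ℤ/2ℤ` (encoded as functions on `ℤ` whose value at
`0` is irrelevant and set to `0`). -/
def tau1 (h : ℤ → ZMod 2) : ℤ → ZMod 2 := fun i =>
  if i < -2 then h (-i) + h (i - 1) + h i + h (i + 1)
  else if i = -2 then h (-i) + h (-2) + h (-3)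
  else if i = -1 then h (-i) + h (-2)
  else if i = 0 then 0
  else h (-i)

/-- The map `τ⁻¹_*` on functions `ℤ* → ℤ/2ℤ`. -/
def tauNeg1 (h : ℤ → ZMod 2) : ℤ → ZMod 2 := fun i =>
  if i < 0 then h (-i)
  else if i = 0 then 0
  else if i = 1 then h (-i) + h 2
  else if i = 2 then h (-i) + h 2 + h 3
  else h (-i) + h (i - 1) + h i + h (i + 1)

/-- The cylinder set `C_k = {h : h(k) = h(-k-1) = 1, h(i) = 0 for -k-1 < i < k, i ≠ 0}`. -/
def Cyl (k : ℤ) : Set (ℤ → ZMod 2) :=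
  {h | h k = 1 ∧ h (-k - 1) = 1 ∧ ∀ i : ℤ, -k - 1 < i → i < k → i ≠ 0 → h i = 0}

/-- `HasProx h k` says the proximity `P(h) = min {|i| : h(i) ≠ 0}` equals `k`. -/
def HasProx (h : ℤ → ZMod 2) (k : ℤ) : Prop :=
  (h k ≠ 0 ∨ h (-k) ≠ 0) ∧ ∀ i : ℤ, i ≠ 0 → |i| < k → h i = 0

/-!
For `i < 0`, `τ¹_* g (i)` is `g (-i)` plus the values of `g` at `i - 1, i, i + 1` (those `≤ -2`);
for `i > 0` it is `g (-i)`. So if `P(g) = k ≥ 2` is attained at `-k`, then `τ¹_* g` vanishes on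
`0 < |i| < k - 1` and `τ¹_* g (-(k-1)) = g (-k) ≠ 0`: the proximity drops by one and is again
attained on the negative side. If instead `g (-k) = 0`, then `g (k) ≠ 0`, and unless also
`g (-k-1) ≠ 0` (which is exactly `g ∈ C_k`) one application of `τ¹_*` moves the nonzero value to
`-k` without changing the proximity. Induction on `k` finishes the proof.
-/

lemma ZMod.two_eq_one_of_ne_zero : ∀ a : ZMod 2, a ≠ 0 → a = 1 := by decide

lemma tau1_apply_of_pos {g : ℤ → ZMod 2} {i : ℤ} (hi : 0 < i) : tau1 g i = g (-i) := by
  unfold tau1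
  split_ifs <;> first | rfl | omega

lemma tau1_apply_of_neg_eq_pred {g : ℤ → ZMod 2} {i : ℤ} (hi : i < 0) (hneg : g (-i) = 0)
    (hself : g i = 0) (hsucc : i + 1 ≠ 0 → g (i + 1) = 0) : tau1 g i = g (i - 1) := by
  unfold tau1
  split_ifs with h1 h2 h3
  · rw [hneg, hself, hsucc (by omega)]; ring
  · subst h2; rw [hneg, hself]; simp
  · subst h3; rw [hneg]; simp
  · omega
  · omega

lemma tau1_apply_of_neg_eq_neg {g : ℤ → ZMod 2} {i : ℤ} (hi : i < 0) (hpred : g (i - 1) = 0)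
    (hself : g i = 0) (hsucc : i + 1 ≠ 0 → g (i + 1) = 0) : tau1 g i = g (-i) := by
  unfold tau1
  split_ifs with h1 h2 h3
  · rw [hpred, hself, hsucc (by omega)]; ring
  · subst h2; rw [hself, show (-3 : ℤ) = -2 - 1 by norm_num, hpred]; ring
  · subst h3; rw [show (-2 : ℤ) = -1 - 1 by norm_num, hpred]; ring
  · omega
  · omega

lemma tau1_eq_zero_of_eq_zero {g : ℤ → ZMod 2} {m : ℤ}
    (hg : ∀ j, j ≠ 0 → -(m + 1) ≤ j → j ≤ m → g j = 0) :
    ∀ i, i ≠ 0 → |i| ≤ m → tau1 g i = 0 := by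
  intro i hi habs
  obtain ⟨hlo, hhi⟩ := abs_le.mp habs
  rcases lt_or_gt_of_ne hi with hneg | hpos
  · rw [tau1_apply_of_neg_eq_pred hneg (hg _ (by omega) (by omega) (by omega))
      (hg _ hi (by omega) (by omega)) (fun h1 => hg _ h1 (by omega) (by omega))]
    exact hg _ (by omega) (by omega) (by omega)
  · rw [tau1_apply_of_pos hpos]
    exact hg _ (by omega) (by omega) (by omega)

lemma HasProx.eq_zero {g : ℤ → ZMod 2} {k j : ℤ} (hP : HasProx g k) (hj : j ≠ 0)
    (hlo : -k < j) (hhi : j < k) : g j = 0 :=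
  hP.2 j hj (abs_lt.mpr ⟨hlo, hhi⟩)

lemma HasProx.tau1_sub_one {g : ℤ → ZMod 2} {k : ℤ} (hk : 2 ≤ k) (hP : HasProx g k)
    (hg : g (-k) ≠ 0) : HasProx (tau1 g) (k - 1) ∧ tau1 g (-(k - 1)) ≠ 0 := by
  have hval : tau1 g (-(k - 1)) = g (-k) := by
    rw [tau1_apply_of_neg_eq_pred (by omega) (hP.eq_zero (by omega) (by omega) (by omega))
      (hP.eq_zero (by omega) (by omega) (by omega))
      (fun h1 => hP.eq_zero h1 (by omega) (by omega))]
    ring_nf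
  have hzero := tau1_eq_zero_of_eq_zero (m := k - 2)
    (fun j hj hlo hhi => hP.eq_zero hj (by omega) (by omega))
  exact ⟨⟨Or.inr (hval ▸ hg), fun i hi habs => hzero i hi (by omega)⟩, hval ▸ hg⟩

lemma HasProx.tau1_of_eq_zero {g : ℤ → ZMod 2} {k : ℤ} (hk : 2 ≤ k) (hP : HasProx g k)
    (hg : g (-k) = 0) (hg' : g (-k - 1) = 0) : HasProx (tau1 g) k ∧ tau1 g (-k) ≠ 0 := by
  have hgk : g k ≠ 0 := hP.1.resolve_right (not_not.mpr hg)
  have hval : tau1 g (-k) = g k := by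
    rw [tau1_apply_of_neg_eq_neg (by omega) hg' hg
      (fun h1 => hP.eq_zero h1 (by omega) (by omega)), neg_neg]
  have hzero := tau1_eq_zero_of_eq_zero (m := k - 1) fun j hj hlo hhi => by
    rcases hlo.eq_or_lt with rfl | hlt
    · simpa using hg
    · exact hP.eq_zero hj (by omega) (by omega)
  exact ⟨⟨Or.inr (hval ▸ hgk), fun i hi habs => hzero i hi (by omega)⟩, hval ▸ hgk⟩

lemma mem_cyl_of_hasProx {g : ℤ → ZMod 2} {k : ℤ} (hP : HasProx g k) (hg : g (-k) = 0)
    (hg' : g (-k - 1) ≠ 0) : g ∈ Cyl k := by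
  refine ⟨ZMod.two_eq_one_of_ne_zero _ (hP.1.resolve_right (not_not.mpr hg)),
    ZMod.two_eq_one_of_ne_zero _ hg', fun i hlo hhi hi => ?_⟩
  rcases (show -k ≤ i by omega).eq_or_lt with rfl | hlt
  · exact hg
  · exact hP.eq_zero hi hlt hhi

lemma exists_iterate_tau1_hasProx_one_of_neg {k : ℤ} (hk : 1 ≤ k) :
    ∀ g : ℤ → ZMod 2, HasProx g k → g (-k) ≠ 0 → ∃ n : ℕ, HasProx (tau1^[n] g) 1 := by
  induction k, hk using Int.leInduction with
  | base => exact fun g hP _ => ⟨0, hP⟩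
  | succ k hk ih =>
    intro g hP hg
    obtain ⟨hP', hg'⟩ := hP.tau1_sub_one (by omega) hg
    rw [add_sub_cancel_right] at hP' hg'
    obtain ⟨n, hn⟩ := ih (tau1 g) hP' hg'
    exact ⟨n + 1, hn⟩

/-- If `k ≥ 1`, `P(h) = k`, and (in case `k ≥ 2`) `h ∉ C_k`, then there is an `n ≥ 0`
with `P((τ¹_*)^n(h)) = 1`. -/
theorem stmt14 (k : ℤ) (hk : 1 ≤ k) (h : ℤ → ZMod 2)
    (hP : HasProx h k) (hC : 2 ≤ k → h ∉ Cyl k) :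
    ∃ n : ℕ, HasProx (tau1^[n] h) 1 := by
  rcases hk.eq_or_lt with rfl | hk2
  · exact ⟨0, hP⟩
  by_cases hneg : h (-k) = 0
  · have hneg' : h (-k - 1) = 0 := by
      by_contra hne
      exact hC hk2 (mem_cyl_of_hasProx hP hneg hne)
    obtain ⟨hP', hg'⟩ := hP.tau1_of_eq_zero hk2 hneg hneg'
    obtain ⟨n, hn⟩ := exists_iterate_tau1_hasProx_one_of_neg hk (tau1 h) hP' hg'
    exact ⟨n + 1, hn⟩
  · exact exists_iterate_tau1_hasProx_one_of_neg hk h hP hneg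
end

section
/- With the same setup, define Z = ⋃_{k ≥ 2} ⋂_{m ≥ 0} (τ^{-1}_*)^m(C_{k+m}) (equivalently the set of h with (τ¹_*)^m(h) ∈ C_{k+m} for all m ≥ 0, for some k ≥ 2). Then a nonzero h : ℤ* → ℤ/2ℤ satisfies lim_{n→∞} (τ¹_*)^n(h) = 0 (in the product topology, i.e., P((τ¹_*)^n(h)) → ∞) if and only if h ∈ ⋃_{j ≥ 0} (τ^{-1}_*)^j(Z). -/
/-- `Z = ⋃_{k ≥ 2} ⋂_{m ≥ 0} (τ⁻¹_*)^m(C_{k+m})`: the set of `h` such that, for some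
`k ≥ 2`, `(τ¹_*)^m(h) ∈ C_{k+m}` for all `m ≥ 0`. -/
def Zset : Set (ℤ → ZMod 2) :=
  {h | ∃ k : ℤ, 2 ≤ k ∧ ∀ m : ℕ, tau1^[m] h ∈ Cyl (k + m)}

/-! Call `D_k` the set of `g` vanishing on `0 < |i| < k` with `g (-k) = 1`. For `k ≥ 2`, `τ¹_*`
maps `D_k` into `D_{k-1}`, so an orbit that meets some `D_k` later has a `1` at `-2` and does not
tend to zero.

If `(τ¹_*)^n h → 0`, pick `M` beyond which the orbit vanishes at `-2` and let `k ≥ 2` be the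
proximity of `g = (τ¹_*)^M h`. Since neither `g` nor `τ¹_* g` may lie in `D_k`, we get
`g (-k) = 0`, `g k = 1` and `g (-k-1) = 1`, that is `g ∈ C_k`. Then `τ¹_* g` has proximity
`k + 1`, and repeating the argument gives `(τ¹_*)^m g ∈ C_{k+m}` for all `m`, i.e. `g ∈ Z`,
while `h = (τ⁻¹_*)^M g`. Conversely, members of `C_{k+m}` vanish on `0 < |i| < k + m`, so
orbits through `Z` tend to zero.
-/

open Function Set

section Eval

variable (g : ℤ → ZMod 2) {i : ℤ}

lemma tau1_of_pos (hi : 0 < i) : tau1 g i = g (-i) := by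
  simp [tau1, show ¬ i < -2 by omega, hi.ne', show i ≠ -2 by omega, show i ≠ -1 by omega]

lemma tau1_zero : tau1 g 0 = 0 := by simp [tau1]

lemma tau1_neg_one : tau1 g (-1) = g 1 + g (-2) := by simp [tau1]

lemma tau1_neg_two : tau1 g (-2) = g 2 + g (-2) + g (-3) := by simp [tau1]

lemma tau1_of_lt_neg_two (hi : i < -2) :
    tau1 g i = g (-i) + g (i - 1) + g i + g (i + 1) := by
  simp [tau1, hi]

lemma tauNeg1_of_neg (hi : i < 0) : tauNeg1 g i = g (-i) := by simp [tauNeg1, hi]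

lemma tauNeg1_one : tauNeg1 g 1 = g (-1) + g 2 := by simp [tauNeg1]

lemma tauNeg1_two : tauNeg1 g 2 = g (-2) + g 2 + g 3 := by simp [tauNeg1]

lemma tauNeg1_of_two_lt (hi : 2 < i) :
    tauNeg1 g i = g (-i) + g (i - 1) + g i + g (i + 1) := by
  simp [tauNeg1, show ¬ i < 0 by omega, show i ≠ 0 by omega, show i ≠ 1 by omega,
    show i ≠ 2 by omega]

end Eval

lemma tau1_tauNeg1_apply (g : ℤ → ZMod 2) {i : ℤ} (hi : i ≠ 0) :
    tau1 (tauNeg1 g) i = g i := by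
  obtain hi | rfl | rfl | hi : i < -2 ∨ i = -2 ∨ i = -1 ∨ 0 < i := by omega
  · rw [tau1_of_lt_neg_two _ hi, tauNeg1_of_two_lt _ (by omega), tauNeg1_of_neg _ (by omega),
      tauNeg1_of_neg _ (by omega), tauNeg1_of_neg _ (by omega)]
    grind
  · rw [tau1_neg_two, tauNeg1_two, tauNeg1_of_neg _ (by omega), tauNeg1_of_neg _ (by omega)]
    grind
  · rw [tau1_neg_one, tauNeg1_one, tauNeg1_of_neg _ (by omega)]
    grind
  · rw [tau1_of_pos _ hi, tauNeg1_of_neg _ (by omega), neg_neg]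

lemma tauNeg1_tau1 {g : ℤ → ZMod 2} (hg : g 0 = 0) : tauNeg1 (tau1 g) = g := by
  funext i
  obtain hi | rfl | rfl | rfl | hi : i < 0 ∨ i = 0 ∨ i = 1 ∨ i = 2 ∨ 2 < i := by omega
  · rw [tauNeg1_of_neg _ hi, tau1_of_pos _ (by omega), neg_neg]
  · simp [tauNeg1, hg]
  · rw [tauNeg1_one, tau1_neg_one, tau1_of_pos _ (by omega)]
    grind
  · rw [tauNeg1_two, tau1_neg_two, tau1_of_pos _ (by omega), tau1_of_pos _ (by omega)]
    grind
  · rw [tauNeg1_of_two_lt _ hi, tau1_of_lt_neg_two _ (by omega), tau1_of_pos _ (by omega),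
      tau1_of_pos _ (by omega), tau1_of_pos _ (by omega)]
    grind

lemma tau1_congr {a b : ℤ → ZMod 2} (hab : EqOn a b {0}ᶜ) : tau1 a = tau1 b := by
  have hab' : ∀ i, i ≠ 0 → a i = b i := hab
  funext i
  simp only [tau1]
  split_ifs <;> grind

lemma tau1_iterate_congr {a b : ℤ → ZMod 2} (hab : EqOn a b {0}ᶜ) :
    ∀ n : ℕ, EqOn (tau1^[n] a) (tau1^[n] b) {0}ᶜ
  | 0 => hab
  | n + 1 => by
    rw [iterate_succ_apply, iterate_succ_apply, tau1_congr hab]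
    exact eqOn_refl _ _

lemma tau1_iterate_tauNeg1_iterate (g : ℤ → ZMod 2) :
    ∀ n : ℕ, EqOn (tau1^[n] (tauNeg1^[n] g)) g {0}ᶜ
  | 0 => eqOn_refl _ _
  | n + 1 => by
    rw [iterate_succ_apply, iterate_succ_apply']
    exact (tau1_iterate_congr (fun _ hi => tau1_tauNeg1_apply _ hi) n).trans
      (tau1_iterate_tauNeg1_iterate g n)

lemma tau1_iterate_apply_zero {g : ℤ → ZMod 2} (hg : g 0 = 0) :
    ∀ n : ℕ, tau1^[n] g 0 = 0
  | 0 => hg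
  | n + 1 => by rw [iterate_succ_apply', tau1_zero]

lemma tauNeg1_iterate_tau1_iterate {g : ℤ → ZMod 2} (hg : g 0 = 0) :
    ∀ n : ℕ, tauNeg1^[n] (tau1^[n] g) = g
  | 0 => rfl
  | n + 1 => by
    rw [iterate_succ_apply, iterate_succ_apply', tauNeg1_tau1 (tau1_iterate_apply_zero hg n),
      tauNeg1_iterate_tau1_iterate hg n]

lemma exists_tau1_iterate_apply_ne_zero {g : ℤ → ZMod 2} (hg : g 0 = 0) (hne : g ≠ 0)
    (n : ℕ) : ∃ i, i ≠ 0 ∧ tau1^[n] g i ≠ 0 := by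
  by_contra! hvan
  have hzero : tau1^[n] g = 0 := by
    funext i
    by_cases hi : i = 0
    · rw [hi]; exact tau1_iterate_apply_zero hg n
    · exact hvan i hi
  have htauNeg1 : tauNeg1 0 = 0 := by funext i; simp [tauNeg1]
  apply hne
  rw [← tauNeg1_iterate_tau1_iterate hg n, hzero, iterate_fixed htauNeg1]

/-- `P(g) ≥ k` in the paper's notation. -/
def VanishesBelow (g : ℤ → ZMod 2) (k : ℤ) : Prop :=
  ∀ i, i ≠ 0 → |i| < k → g i = 0

lemma vanishesBelow_iff {g : ℤ → ZMod 2} {k : ℤ} :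
    VanishesBelow g k ↔ ∀ i, i ≠ 0 → -k < i → i < k → g i = 0 := by
  simp only [VanishesBelow, abs_lt]
  grind

lemma exists_hasProx {g : ℤ → ZMod 2} {i : ℤ} (hi : i ≠ 0) (hgi : g i ≠ 0) :
    ∃ k, 0 < k ∧ HasProx g k := by
  classical
  have hP : ∃ n : ℕ, 0 < n ∧ (g n ≠ 0 ∨ g (-n) ≠ 0) := by
    refine ⟨i.natAbs, by omega, ?_⟩
    rcases Int.natAbs_eq i with h | h
    · exact Or.inl (h ▸ hgi)
    · exact Or.inr (by rwa [← h])
  obtain ⟨hpos, hwit⟩ := Nat.find_spec hP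
  refine ⟨Nat.find hP, by exact_mod_cast hpos, hwit, fun j hj hjk => ?_⟩
  have hmin := Nat.find_min hP (show j.natAbs < Nat.find hP by grind)
  push Not at hmin
  rcases Int.natAbs_eq j with h | h <;> rw [h]
  exacts [(hmin (by omega)).1, (hmin (by omega)).2]

lemma mem_Cyl_iff {g : ℤ → ZMod 2} {k : ℤ} (hk : 0 < k) :
    g ∈ Cyl k ↔ VanishesBelow g k ∧ g (-k) = 0 ∧ g k = 1 ∧ g (-k - 1) = 1 := by
  constructor
  · rintro ⟨h1, h2, hvan⟩
    exact ⟨fun i hi hik => hvan i (by grind) (by grind) hi,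
      hvan _ (by omega) (by omega) (by omega), h1, h2⟩
  · rintro ⟨hvan, h0, h1, h2⟩
    refine ⟨h1, h2, fun i hlo hhi hi => ?_⟩
    obtain rfl | hik : i = -k ∨ |i| < k := by grind
    exacts [h0, hvan i hi hik]

section Descent

variable {g : ℤ → ZMod 2} {k : ℤ}

lemma tau1_apply_eq_zero (hk : 2 ≤ k) (hg : VanishesBelow g k) {i : ℤ} (hi : i ≠ 0)
    (hlo : -(k - 1) < i) (hhi : i < k) : tau1 g i = 0 := by
  rw [vanishesBelow_iff] at hg
  simp only [tau1]
  split_ifs <;> grind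

lemma tau1_apply_neg_sub_one (hk : 2 ≤ k) (hg : VanishesBelow g k) :
    tau1 g (-(k - 1)) = g (-k) := by
  rw [vanishesBelow_iff] at hg
  simp only [tau1]
  split_ifs <;> grind

lemma tau1_apply_neg (hk : 2 ≤ k) (hg : VanishesBelow g k) :
    tau1 g (-k) = g k + g (-k - 1) + g (-k) := by
  rw [vanishesBelow_iff] at hg
  simp only [tau1]
  split_ifs <;> grind

lemma vanishesBelow_tau1 (hk : 2 ≤ k) (hg : VanishesBelow g k) (hgk : g (-k) = 0) :
    VanishesBelow (tau1 g) k := by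
  intro i hi hik
  obtain rfl | hlo : i = -(k - 1) ∨ -(k - 1) < i := by grind
  · rw [tau1_apply_neg_sub_one hk hg, hgk]
  · exact tau1_apply_eq_zero hk hg hi hlo (by grind)

lemma exists_tau1_iterate_apply_neg_two_eq_one (hk : 2 ≤ k) (hg : VanishesBelow g k)
    (hgk : g (-k) = 1) : ∃ n : ℕ, tau1^[n] g (-2) = 1 := by
  obtain ⟨n, rfl⟩ : ∃ n : ℕ, k = n + 2 := ⟨(k - 2).toNat, by omega⟩
  induction n generalizing g with
  | zero => exact ⟨0, hgk⟩
  | succ n ih =>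
    have hvan : VanishesBelow (tau1 g) (n + 2) := fun i hi hik =>
      tau1_apply_eq_zero hk hg hi (by grind) (by grind)
    have hneg : tau1 g (-(n + 2 : ℕ)) = 1 := by
      rw [← hgk, ← tau1_apply_neg_sub_one hk hg]
      push_cast; ring_nf
    obtain ⟨m, hm⟩ := ih (by omega) hvan hneg
    exact ⟨m + 1, hm⟩

lemma mem_Cyl_of_hasProx (hk : 2 ≤ k) (hg : HasProx g k)
    (hret : ∀ n : ℕ, tau1^[n] g (-2) = 0) : g ∈ Cyl k := by
  have hneg : g (-k) = 0 := by
    by_contra h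
    obtain ⟨n, hn⟩ :=
      exists_tau1_iterate_apply_neg_two_eq_one hk hg.2 (Fin.eq_one_of_ne_zero _ h)
    exact zero_ne_one (hret n ▸ hn)
  have hpos : g k = 1 := Fin.eq_one_of_ne_zero _ (hg.1.resolve_right (not_not.2 hneg))
  have hnext : g (-k - 1) = 1 := by
    by_contra h
    have hτ : tau1 g (-k) = 1 := by
      rw [tau1_apply_neg hk hg.2, hpos, hneg, not_imp_comm.1 (Fin.eq_one_of_ne_zero _) h]; rfl
    obtain ⟨n, hn⟩ :=
      exists_tau1_iterate_apply_neg_two_eq_one hk (vanishesBelow_tau1 hk hg.2 hneg) hτ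
    exact zero_ne_one (hret (n + 1) ▸ hn)
  exact (mem_Cyl_iff (by omega)).2 ⟨hg.2, hneg, hpos, hnext⟩

lemma hasProx_tau1_of_mem_Cyl (hk : 2 ≤ k) (hg : g ∈ Cyl k) : HasProx (tau1 g) (k + 1) := by
  obtain ⟨hvan, hneg, hpos, hnext⟩ := (mem_Cyl_iff (by omega)).1 hg
  refine ⟨Or.inl ?_, fun i hi hik => ?_⟩
  · rw [tau1_of_pos _ (by omega), neg_add, ← sub_eq_add_neg, hnext]
    exact one_ne_zero
  obtain rfl | rfl | hik : i = k ∨ i = -k ∨ |i| < k := by grind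
  · rw [tau1_of_pos _ (by omega), hneg]
  · rw [tau1_apply_neg hk hvan, hpos, hneg, hnext]; rfl
  · exact vanishesBelow_tau1 hk hvan hneg i hi hik

end Descent

lemma mem_Zset_of_hasProx {g : ℤ → ZMod 2} {k : ℤ} (hk : 2 ≤ k) (hg : HasProx g k)
    (hret : ∀ n : ℕ, tau1^[n] g (-2) = 0) : g ∈ Zset := by
  refine ⟨k, hk, fun m => ?_⟩
  induction m with
  | zero => simpa using mem_Cyl_of_hasProx hk hg hret
  | succ m ih =>
    have hprox : HasProx (tau1^[m + 1] g) (k + (m + 1 : ℕ)) := by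
      rw [iterate_succ_apply', Nat.cast_succ, ← add_assoc]
      exact hasProx_tau1_of_mem_Cyl (by omega) ih
    refine mem_Cyl_of_hasProx (by omega) hprox fun n => ?_
    rw [← iterate_add_apply]
    exact hret _

/-- A nonzero `h : ℤ* → ℤ/2ℤ` satisfies `(τ¹_*)^n(h) → 0` in the product topology
(equivalently, the proximity `P((τ¹_*)^n(h)) → ∞`) if and only if
`h ∈ ⋃_{j ≥ 0} (τ⁻¹_*)^j(Z)`. -/
theorem stmt15 (h : ℤ → ZMod 2) (h0 : h 0 = 0) (hne : h ≠ fun _ => 0) :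
    (∀ N : ℤ, ∃ M : ℕ, ∀ n ≥ M, ∀ i : ℤ, i ≠ 0 → |i| ≤ N → tau1^[n] h i = 0) ↔
      ∃ (j : ℕ) (z : ℤ → ZMod 2), z ∈ Zset ∧ h = tauNeg1^[j] z := by
  constructor
  · intro hlim
    obtain ⟨M, hM⟩ := hlim 2
    have hret : ∀ n : ℕ, tau1^[n] (tau1^[M] h) (-2) = 0 := fun n => by
      rw [← iterate_add_apply]
      exact hM _ (by omega) _ (by norm_num) (by norm_num)
    obtain ⟨i, hi, hgi⟩ := exists_tau1_iterate_apply_ne_zero h0 hne M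
    obtain ⟨k, hk, hprox⟩ := exists_hasProx hi hgi
    have hk2 : 2 ≤ k := by
      by_contra hk1
      obtain rfl : k = 1 := by omega
      exact hprox.1.elim (· (hM M le_rfl 1 one_ne_zero (by norm_num)))
        (· (hM M le_rfl (-1) (by norm_num) (by norm_num)))
    exact ⟨M, _, mem_Zset_of_hasProx hk2 hprox hret,
      (tauNeg1_iterate_tau1_iterate h0 M).symm⟩
  · rintro ⟨j, z, ⟨k, hk, hz⟩, rfl⟩ N
    refine ⟨j + (N - k).toNat + 1, fun n hn i hi hiN => ?_⟩
    obtain ⟨m, rfl⟩ : ∃ m : ℕ, n = m + j := ⟨n - j, by omega⟩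
    rw [iterate_add_apply, tau1_iterate_congr (tau1_iterate_tauNeg1_iterate z j) m hi]
    exact ((mem_Cyl_iff (by omega)).1 (hz m)).1 i hi (by grind)
end
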